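/- Let G be a finite simple triangle-free graph on n vertices with minimum degree δ ≥ 3. Then every edge 2-coloring of G uses at most (n/2)·(1 + 1/(δ − 1)) colors; equivalently, if c is the number of colors of an edge 2-coloring of G, then 2·c·(δ − 1) ≤ n·δ. -/

import Mathlib

/-!
Discharging. For a colour `k` with `d_k(v) > 0` edges of colour `k` at `v`, let the pair
`(k, v)` carry weight `max (δ - d_k(v)) 1`. A vertex sees at most two colours and has degree
at least `δ`, so it carries total weight at most `δ`. The edges of colour `k` form a
triangle-free graph; for one of its edges `zw` the colour-`k` neighbourhoods of `z` and `w` are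
disjoint, so `d_k(z) + d_k(w)` is at most the number `s` of vertices touched by colour `k`, and
colour `k` collects weight at least `(δ - d_k(z)) + (δ - d_k(w)) + (s - 2) ≥ 2δ - 2`.
Counting the weight both ways gives `(2δ - 2) · c ≤ n · δ`.
-/

open SimpleGraph

/-- `C` is an edge 2-coloring of `G`: for every vertex, the edges incident to it
carry at most 2 distinct colors. -/
def IsEdge2Coloring {V : Type*} (G : SimpleGraph V) (C : Sym2 V → ℕ) : Prop :=
  ∀ v : V, (C '' G.incidenceSet v).ncard ≤ 2

/-- The number of distinct colors used by a coloring `C` on the edges of `G`. -/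
noncomputable def numColors {V : Type*} (G : SimpleGraph V) (C : Sym2 V → ℕ) : ℕ :=
  (C '' G.edgeSet).ncard

/-- `OPT G`: the maximum number of colors used by an edge 2-coloring of `G`. -/
noncomputable def OPT {V : Type*} (G : SimpleGraph V) : ℕ :=
  sSup {n : ℕ | ∃ C : Sym2 V → ℕ, IsEdge2Coloring G C ∧ numColors G C = n}

/-- `M` is a matching of `G`, given as a set of edges: the edges belong to `G` and
are pairwise vertex-disjoint. -/
def IsMatchingSet {V : Type*} (G : SimpleGraph V) (M : Set (Sym2 V)) : Prop :=
  M ⊆ G.edgeSet ∧ ∀ e ∈ M, ∀ f ∈ M, e ≠ f → ∀ v : V, v ∈ e → v ∉ f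

/-- `ALG G M`: number of colors produced by the matching based algorithm, i.e.
`|M|` plus the number of connected components of `G − M`. -/
noncomputable def ALG {V : Type*} (G : SimpleGraph V) (M : Set (Sym2 V)) : ℕ :=
  M.ncard + Nat.card (G.deleteEdges M).ConnectedComponent

/-- `H` is a characteristic subgraph of `G` with respect to the coloring `C`:
a subgraph of `G` containing exactly one edge of each color used by `C`. -/
def IsCharSubgraph {V : Type*} (G : SimpleGraph V) (C : Sym2 V → ℕ)
    (H : SimpleGraph V) : Prop :=
  H ≤ G ∧ ∀ c ∈ C '' G.edgeSet, ∃! e, e ∈ H.edgeSet ∧ C e = c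

open Finset

lemma sum_max_sub_le_of_card_le_two {ι : Type*} {s : Finset ι} {f : ι → ℕ} {δ : ℕ}
    (hδ : 2 ≤ δ) (hs : #s ≤ 2) (hf : ∀ i ∈ s, 0 < f i) (hsum : δ ≤ ∑ i ∈ s, f i) :
    ∑ i ∈ s, max (δ - f i) 1 ≤ δ := by
  classical
  obtain hs | hs | hs : #s = 0 ∨ #s = 1 ∨ #s = 2 := by omega
  · simp [card_eq_zero.1 hs]
  · obtain ⟨a, rfl⟩ := card_eq_one.1 hs
    simp only [sum_singleton] at hsum ⊢
    omega
  · obtain ⟨a, b, hab, rfl⟩ := card_eq_two.1 hs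
    have ha := hf a (by simp)
    have hb := hf b (by simp)
    rw [sum_pair hab] at hsum ⊢
    omega

lemma numColors_eq_card_image {V : Type*} (G : SimpleGraph V) [Fintype G.edgeSet]
    (C : Sym2 V → ℕ) : numColors G C = #(G.edgeFinset.image C) := by
  rw [numColors, ← coe_edgeFinset, ← coe_image, Set.ncard_coe_finset]

namespace SimpleGraph

variable {V : Type*}

section TriangleFree

variable [Fintype V] {H : SimpleGraph V} [DecidableRel H.Adj]

lemma degree_add_degree_le_card_of_adj (hH : H.CliqueFree 3) {z w : V} (hzw : H.Adj z w) :
    H.degree z + H.degree w ≤ #{v | 0 < H.degree v} := by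
  classical
  have hdisj : Disjoint (H.neighborFinset z) (H.neighborFinset w) := by
    refine Finset.disjoint_left.2 fun v hz hw => ?_
    rw [mem_neighborFinset] at hz hw
    exact hH {z, w, v} (is3Clique_triple_iff.2 ⟨hzw, hz, hw⟩)
  rw [← card_neighborFinset_eq_degree, ← card_neighborFinset_eq_degree,
    ← card_union_of_disjoint hdisj]
  refine card_le_card fun v hv => mem_filter.2 ⟨mem_univ v, ?_⟩
  rw [degree_pos_iff_exists_adj]
  rcases mem_union.1 hv with hv | hv
  · exact ⟨z, ((mem_neighborFinset _ _ _).1 hv).symm⟩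
  · exact ⟨w, ((mem_neighborFinset _ _ _).1 hv).symm⟩

lemma two_mul_sub_two_le_sum_max_sub_degree (hH : H.CliqueFree 3) {z w : V} (hzw : H.Adj z w)
    (δ : ℕ) : 2 * δ - 2 ≤ ∑ v ∈ {v | 0 < H.degree v}, max (δ - H.degree v) 1 := by
  classical
  set S : Finset V := {v | 0 < H.degree v}
  have hpair : {z, w} ⊆ S := by
    intro v hv
    rcases mem_insert.1 hv with rfl | hv
    · exact mem_filter.2 ⟨mem_univ _, H.degree_pos_iff_exists_adj v |>.2 ⟨w, hzw⟩⟩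
    · rw [mem_singleton.1 hv]
      exact mem_filter.2 ⟨mem_univ _, H.degree_pos_iff_exists_adj _ |>.2 ⟨z, hzw.symm⟩⟩
  have hrest : #S - 2 ≤ ∑ v ∈ S \ {z, w}, max (δ - H.degree v) 1 := by
    calc #S - 2 = #(S \ {z, w}) := by rw [card_sdiff_of_subset hpair, card_pair hzw.ne]
      _ = ∑ _v ∈ S \ {z, w}, 1 := (card_eq_sum_ones _)
      _ ≤ _ := sum_le_sum fun _ _ => le_max_right _ _
  have hdeg : H.degree z + H.degree w ≤ #S := degree_add_degree_le_card_of_adj hH hzw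
  rw [← sum_sdiff hpair, sum_pair hzw.ne]
  omega

end TriangleFree

variable (G : SimpleGraph V) (C : Sym2 V → ℕ)

def colorClass (k : ℕ) : SimpleGraph V where
  Adj v w := G.Adj v w ∧ C s(v, w) = k
  symm := ⟨fun _ _ h => ⟨h.1.symm, Sym2.eq_swap ▸ h.2⟩⟩
  loopless := ⟨fun _ h => G.irrefl h.1⟩

instance [DecidableRel G.Adj] (k : ℕ) : DecidableRel (G.colorClass C k).Adj :=
  fun _ _ => instDecidableAnd

def palette [Fintype V] [DecidableRel G.Adj] (v : V) : Finset ℕ :=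
  (G.neighborFinset v).image fun w => C s(v, w)

variable {G C}

lemma colorClass_le (k : ℕ) : G.colorClass C k ≤ G := fun _ _ h => h.1

variable [Fintype V] [DecidableRel G.Adj]

lemma neighborFinset_colorClass (k : ℕ) (v : V) :
    (G.colorClass C k).neighborFinset v = {w ∈ G.neighborFinset v | C s(v, w) = k} := by
  ext w
  simp only [mem_neighborFinset, mem_filter]
  rfl

lemma sum_degree_colorClass (v : V) :
    ∑ k ∈ G.palette C v, (G.colorClass C k).degree v = G.degree v := by
  simp only [← card_neighborFinset_eq_degree, neighborFinset_colorClass, palette]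
  exact (card_eq_sum_card_image _ _).symm

lemma degree_colorClass_pos_iff {k : ℕ} {v : V} :
    0 < (G.colorClass C k).degree v ↔ k ∈ G.palette C v := by
  simp [← card_neighborFinset_eq_degree, neighborFinset_colorClass, palette, card_pos,
    filter_nonempty_iff]

lemma coe_palette (v : V) : (G.palette C v : Set ℕ) = C '' G.incidenceSet v := by
  ext k
  simp only [palette, coe_image, Set.mem_image, mem_coe, mem_neighborFinset]
  constructor
  · rintro ⟨w, hw, rfl⟩
    exact ⟨s(v, w), G.mk'_mem_incidenceSet_left_iff.2 hw, rfl⟩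
  · rintro ⟨e, he, rfl⟩
    obtain ⟨w, rfl⟩ := Sym2.mem_iff_exists.1 he.2
    exact ⟨w, he.1, rfl⟩

lemma card_palette_le_two (hC : IsEdge2Coloring G C) (v : V) : #(G.palette C v) ≤ 2 := by
  rw [← Set.ncard_coe_finset, coe_palette]
  exact hC v

lemma sum_colors_sum_support_colorClass [DecidableEq V] (f : ℕ → V → ℕ) :
    ∑ k ∈ G.edgeFinset.image C, ∑ v ∈ {v | 0 < (G.colorClass C k).degree v}, f k v =
      ∑ v, ∑ k ∈ G.palette C v, f k v := by
  refine sum_comm' fun k v => ?_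
  simp only [mem_filter, mem_univ, true_and, and_true, degree_colorClass_pos_iff]
  refine ⟨And.right, fun hk => ⟨?_, hk⟩⟩
  obtain ⟨w, hw, rfl⟩ := mem_image.1 hk
  exact mem_image_of_mem C (mem_edgeFinset.2 ((mem_neighborFinset _ _ _).1 hw))

lemma two_mul_sub_two_le_sum_colorClass [DecidableEq V] (hG : G.CliqueFree 3) {k : ℕ}
    (hk : k ∈ G.edgeFinset.image C) (δ : ℕ) :
    2 * δ - 2 ≤ ∑ v ∈ {v | 0 < (G.colorClass C k).degree v},
      max (δ - (G.colorClass C k).degree v) 1 := by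
  obtain ⟨e, he, rfl⟩ := mem_image.1 hk
  induction e using Sym2.ind with
  | h z w =>
    exact two_mul_sub_two_le_sum_max_sub_degree (hG.anti (colorClass_le _))
      ⟨mem_edgeFinset.1 he, rfl⟩ δ

lemma sum_palette_le_of_le_degree (hC : IsEdge2Coloring G C) {δ : ℕ} (hδ : 2 ≤ δ) {v : V}
    (hv : δ ≤ G.degree v) : ∑ k ∈ G.palette C v, max (δ - (G.colorClass C k).degree v) 1 ≤ δ :=
  sum_max_sub_le_of_card_le_two hδ (card_palette_le_two hC v)
    (fun _ hk => degree_colorClass_pos_iff.2 hk) (by rwa [sum_degree_colorClass])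

end SimpleGraph

/-- A triangle-free graph on `n` vertices with minimum degree `δ ≥ 3` admits no edge
2-coloring with more than `(n/2)(1 + 1/(δ−1))` colors: `2·c·(δ−1) ≤ n·δ`. -/
theorem numColors_le_of_minDegree_triangleFree {V : Type*} [Fintype V] (G : SimpleGraph V)
    (hfree : G.CliqueFree 3) (δ : ℕ)
    (hδ3 : 3 ≤ δ) (hδ : ∀ v : V, δ ≤ (G.neighborSet v).ncard)
    (C : Sym2 V → ℕ) (hC : IsEdge2Coloring G C) :
    2 * numColors G C * (δ - 1) ≤ Fintype.card V * δ := by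
  classical
  have hdeg (v : V) : δ ≤ G.degree v := by
    rw [← card_neighborSet_eq_degree, ← Nat.card_eq_fintype_card, Nat.card_coe_set_eq]
    exact hδ v
  calc 2 * numColors G C * (δ - 1) = #(G.edgeFinset.image C) * (2 * δ - 2) := by
        rw [numColors_eq_card_image, mul_comm 2, mul_assoc, Nat.mul_sub_one]
    _ ≤ ∑ k ∈ G.edgeFinset.image C, ∑ v ∈ {v | 0 < (G.colorClass C k).degree v},
          max (δ - (G.colorClass C k).degree v) 1 := by
        rw [← smul_eq_mul]
        exact card_nsmul_le_sum _ _ _ fun k hk =>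
          two_mul_sub_two_le_sum_colorClass hfree hk δ
    _ = ∑ v, ∑ k ∈ G.palette C v, max (δ - (G.colorClass C k).degree v) 1 :=
        sum_colors_sum_support_colorClass _
    _ ≤ ∑ _v : V, δ := sum_le_sum fun v _ => sum_palette_le_of_le_degree hC (by omega) (hdeg v)
    _ = Fintype.card V * δ := by simp
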